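/- arXiv:2604.12087 — 2 statements merged into one kernel-verified Lean document; each statement's English description precedes it below -/
import Mathlib

section
/- Let θ₁,…,θ_J be the support points of a probability measure g₀ on a bounded set Θ ⊆ ℝ, let θ₀ ∈ Θ, M := sup_{θ∈Θ}|θ-θ₀|, and let g be any probability measure on Θ. Then |∫ (θ-θ₀)^{k-2J} ∏_{j=1}^J (θ-θ_j)² d(g-g₀)(θ)| ≤ (M+1)^{2J} M^{k-2J} max_{1≤j≤2J}|m_{j,g}-m_{j,g₀}| for every integer k > 2J, where m_{j,ν} := ∫(θ-θ₀)^j dν(θ). -/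
/-!
The weight `P θ = ∏ⱼ (θ - θⱼ)²` is nonnegative and vanishes `g₀`-almost everywhere, so the
difference of integrals is `∫ (θ - θ₀)^(k-2J) P dg`, which is at most
`M^(k-2J) ∫ P dg = M^(k-2J) ∫ P d(g - g₀)`.
Expanding `P` in powers of `θ - θ₀` turns the last integral into a combination of the moment
differences of orders `1, …, 2J` (order `0` cancels, both measures having mass one), whose
coefficients have absolute sum at most `∏ⱼ (1 + |θⱼ - θ₀|)² ≤ (M + 1)^(2J)` by submultiplicativity
of the `ℓ¹` norm of coefficients.
-/

open MeasureTheory Finset Polynomial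

namespace Polynomial

section SeminormedRing

variable {R : Type*} [SeminormedRing R]

noncomputable def l1Norm (p : R[X]) : ℝ := p.sum fun _ a => ‖a‖

lemma l1Norm_eq_sum_range {p : R[X]} {N : ℕ} (h : p.natDegree < N) :
    p.l1Norm = ∑ i ∈ range N, ‖p.coeff i‖ :=
  p.sum_over_range' (fun _ => norm_zero) N h

lemma l1Norm_nonneg (p : R[X]) : 0 ≤ p.l1Norm :=
  sum_nonneg fun _ _ => norm_nonneg _

@[simp]
lemma l1Norm_zero : (0 : R[X]).l1Norm = 0 := by simp [l1Norm]

lemma l1Norm_add_le (p q : R[X]) : (p + q).l1Norm ≤ p.l1Norm + q.l1Norm := by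
  have hN : ∀ {r : R[X]}, r.natDegree ≤ max p.natDegree q.natDegree →
      r.natDegree < max p.natDegree q.natDegree + 1 := Nat.lt_succ_of_le
  rw [l1Norm_eq_sum_range (hN (natDegree_add_le p q)), l1Norm_eq_sum_range (hN (le_max_left _ _)),
    l1Norm_eq_sum_range (hN (le_max_right _ _)), ← sum_add_distrib]
  exact sum_le_sum fun i _ => by simpa only [coeff_add] using norm_add_le _ _

lemma l1Norm_sum_le {ι : Type*} (s : Finset ι) (f : ι → R[X]) :
    (∑ i ∈ s, f i).l1Norm ≤ ∑ i ∈ s, (f i).l1Norm :=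
  le_sum_of_subadditive _ l1Norm_zero.le l1Norm_add_le s f

lemma l1Norm_monomial_mul_le (n : ℕ) (a : R) (p : R[X]) :
    (monomial n a * p).l1Norm ≤ ‖a‖ * p.l1Norm := by
  have hdeg : (monomial n a * p).natDegree < n + (p.natDegree + 1) := by
    have := natDegree_mul_le (p := monomial n a) (q := p)
    have := natDegree_monomial_le a (m := n)
    omega
  have hlow : ∀ i ∈ range n, (monomial n a * p).coeff i = 0 := fun i hi => by
    rw [← C_mul_X_pow_eq_monomial, mul_assoc, coeff_C_mul, coeff_X_pow_mul',
      if_neg (by simpa using hi), mul_zero]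
  rw [l1Norm_eq_sum_range hdeg, sum_range_add, sum_eq_zero fun i hi => by rw [hlow i hi, norm_zero],
    zero_add, l1Norm_eq_sum_range (Nat.lt_succ_self _), mul_sum]
  exact sum_le_sum fun i _ => by rw [add_comm, coeff_monomial_mul]; exact norm_mul_le _ _

lemma l1Norm_mul_le (p q : R[X]) : (p * q).l1Norm ≤ p.l1Norm * q.l1Norm := by
  conv_lhs => rw [p.as_sum_support, sum_mul]
  calc _ ≤ ∑ n ∈ p.support, (monomial n (p.coeff n) * q).l1Norm := l1Norm_sum_le _ _
    _ ≤ ∑ n ∈ p.support, ‖p.coeff n‖ * q.l1Norm :=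
      sum_le_sum fun n _ => l1Norm_monomial_mul_le _ _ _
    _ = p.l1Norm * q.l1Norm := (sum_mul _ _ _).symm

variable [NormOneClass R]

@[simp]
lemma l1Norm_one : (1 : R[X]).l1Norm = 1 := by
  simp [l1Norm_eq_sum_range (p := 1) (N := 1) (by simp)]

lemma l1Norm_X_sub_C (a : R) : (X - C a).l1Norm = 1 + ‖a‖ := by
  rw [l1Norm_eq_sum_range (N := 2) ((natDegree_X_sub_C_le a).trans_lt one_lt_two)]
  simp [sum_range_succ, add_comm]

lemma l1Norm_pow_le (p : R[X]) (n : ℕ) : (p ^ n).l1Norm ≤ p.l1Norm ^ n := by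
  induction n with
  | zero => simp
  | succ n ih =>
    rw [pow_succ, pow_succ]
    exact (l1Norm_mul_le _ _).trans (mul_le_mul_of_nonneg_right ih (l1Norm_nonneg p))

end SeminormedRing

section SeminormedCommRing

variable {R : Type*} [SeminormedCommRing R] [NormOneClass R] {ι : Type*}

lemma l1Norm_prod_le (s : Finset ι) (f : ι → R[X]) :
    (∏ i ∈ s, f i).l1Norm ≤ ∏ i ∈ s, (f i).l1Norm := by
  induction s using Finset.cons_induction with
  | empty => simp
  | cons i s hi ih =>
    rw [prod_cons, prod_cons]
    exact (l1Norm_mul_le _ _).trans (mul_le_mul_of_nonneg_left ih (l1Norm_nonneg _))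

lemma l1Norm_prod_X_sub_C_le (s : Finset ι) (a : ι → R) {M : ℝ} (ha : ∀ i ∈ s, ‖a i‖ ≤ M) :
    (∏ i ∈ s, (X - C (a i))).l1Norm ≤ (1 + M) ^ #s := by
  calc _ ≤ ∏ i ∈ s, (1 + ‖a i‖) :=
      (l1Norm_prod_le s _).trans_eq (prod_congr rfl fun i _ => l1Norm_X_sub_C (a i))
    _ ≤ ∏ _i ∈ s, (1 + M) :=
      prod_le_prod (fun _ _ => by positivity) fun i hi => add_le_add_right (ha i hi) 1
    _ = (1 + M) ^ #s := prod_const _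

lemma l1Norm_prod_X_sub_C_pow_le (s : Finset ι) (a : ι → R) {M : ℝ} (ha : ∀ i ∈ s, ‖a i‖ ≤ M)
    (n : ℕ) :
    ((∏ i ∈ s, (X - C (a i))) ^ n).l1Norm ≤ (1 + M) ^ (n * #s) :=
  calc _ ≤ (∏ i ∈ s, (X - C (a i))).l1Norm ^ n := l1Norm_pow_le _ n
    _ ≤ ((1 + M) ^ #s) ^ n := pow_le_pow_left₀ (l1Norm_nonneg _) (l1Norm_prod_X_sub_C_le s a ha) n
    _ = (1 + M) ^ (n * #s) := by rw [← pow_mul, mul_comm]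

end SeminormedCommRing

lemma natDegree_prod_X_sub_C_pow {R : Type*} [CommRing R] [Nontrivial R] {ι : Type*}
    (s : Finset ι) (a : ι → R) (n : ℕ) : ((∏ i ∈ s, (X - C (a i))) ^ n).natDegree = n * #s := by
  rw [(monic_prod_of_monic _ _ fun i _ => monic_X_sub_C (a i)).natDegree_pow,
    natDegree_prod_of_monic _ _ fun i _ => monic_X_sub_C (a i)]
  simp

end Polynomial

section Moments

variable {α : Type*} [MeasurableSpace α] {μ ν : Measure α} {f : α → ℝ}

lemma integrable_pow_of_ae_abs_le [IsFiniteMeasure μ] (hf : AEStronglyMeasurable f μ) {M : ℝ}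
    (hM : ∀ᵐ x ∂μ, |f x| ≤ M) (i : ℕ) : Integrable (fun x => f x ^ i) μ :=
  .of_bound (hf.pow i) (M ^ i) <| hM.mono fun x hx => by
    rw [norm_pow, Real.norm_eq_abs]; exact pow_le_pow_left₀ (abs_nonneg _) hx i

lemma integrable_eval_of_integrable_pow (q : ℝ[X]) (hf : ∀ i, Integrable (fun x => f x ^ i) μ) :
    Integrable (fun x => q.eval (f x)) μ := by
  simp_rw [eval_eq_sum_range]
  exact integrable_finsetSum _ fun i _ => (hf i).const_mul _

lemma integral_eval_eq_sum_coeff_mul_integral_pow (q : ℝ[X])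
    (hf : ∀ i, Integrable (fun x => f x ^ i) μ) :
    ∫ x, q.eval (f x) ∂μ = ∑ i ∈ range (q.natDegree + 1), q.coeff i * ∫ x, f x ^ i ∂μ := by
  simp_rw [eval_eq_sum_range]
  rw [integral_finsetSum _ fun i _ => (hf i).const_mul _]
  simp_rw [integral_const_mul]

lemma abs_sum_mul_sub_le {n : ℕ} {c a b : ℕ → ℝ} {S : ℝ} (h0 : a 0 = b 0) (hS0 : 0 ≤ S)
    (hS : ∀ i ∈ Icc 1 n, |a i - b i| ≤ S) :
    |∑ i ∈ range (n + 1), c i * (a i - b i)| ≤ (∑ i ∈ range (n + 1), |c i|) * S := by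
  rw [sum_mul]
  refine (abs_sum_le_sum_abs _ _).trans (sum_le_sum fun i hi => ?_)
  rw [abs_mul]
  refine mul_le_mul_of_nonneg_left ?_ (abs_nonneg _)
  rcases i.eq_zero_or_pos with rfl | hi0
  · rwa [h0, sub_self, abs_zero]
  · exact hS i (mem_Icc.2 ⟨hi0, Nat.lt_succ_iff.1 (mem_range.1 hi)⟩)

lemma abs_integral_eval_sub_le_l1Norm_mul [IsProbabilityMeasure μ] [IsProbabilityMeasure ν]
    (q : ℝ[X]) (hμ : ∀ i, Integrable (fun x => f x ^ i) μ)
    (hν : ∀ i, Integrable (fun x => f x ^ i) ν) {S : ℝ} (hS0 : 0 ≤ S)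
    (hS : ∀ i ∈ Icc 1 q.natDegree, |∫ x, f x ^ i ∂μ - ∫ x, f x ^ i ∂ν| ≤ S) :
    |∫ x, q.eval (f x) ∂μ - ∫ x, q.eval (f x) ∂ν| ≤ q.l1Norm * S := by
  rw [integral_eval_eq_sum_coeff_mul_integral_pow q hμ,
    integral_eval_eq_sum_coeff_mul_integral_pow q hν, ← sum_sub_distrib,
    l1Norm_eq_sum_range (Nat.lt_succ_self _)]
  simp_rw [← mul_sub]
  exact abs_sum_mul_sub_le (by simp) hS0 hS

lemma abs_integral_mul_sub_le_of_ae_eq_zero {w P : α → ℝ} {C : ℝ} (hP : Integrable P μ)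
    (hP0 : ∀ᵐ x ∂μ, 0 ≤ P x) (hw : ∀ᵐ x ∂μ, |w x| ≤ C) (hν : ∀ᵐ x ∂ν, P x = 0) :
    |∫ x, w x * P x ∂μ - ∫ x, w x * P x ∂ν| ≤ C * |∫ x, P x ∂μ - ∫ x, P x ∂ν| := by
  rw [integral_eq_zero_of_ae (f := fun x => w x * P x) (hν.mono fun x hx => by simp [hx]),
    integral_eq_zero_of_ae (f := P) hν,
    sub_zero, sub_zero, abs_of_nonneg (integral_nonneg_of_ae hP0), ← integral_const_mul,
    ← Real.norm_eq_abs]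
  refine norm_integral_le_of_norm_le (hP.const_mul C) ?_
  filter_upwards [hw, hP0] with x hwx hPx
  rw [norm_mul, Real.norm_eq_abs, Real.norm_of_nonneg hPx]
  exact mul_le_mul_of_nonneg_right hwx hPx

lemma abs_integral_mul_eval_sub_le_of_ae_eval_eq_zero [IsProbabilityMeasure μ]
    [IsProbabilityMeasure ν] (q : ℝ[X]) {w : α → ℝ} {C S : ℝ}
    (hμ : ∀ i, Integrable (fun x => f x ^ i) μ) (hν : ∀ i, Integrable (fun x => f x ^ i) ν)
    (hq : ∀ᵐ x ∂μ, 0 ≤ q.eval (f x)) (hqν : ∀ᵐ x ∂ν, q.eval (f x) = 0)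
    (hC : 0 ≤ C) (hw : ∀ᵐ x ∂μ, |w x| ≤ C) (hS0 : 0 ≤ S)
    (hS : ∀ i ∈ Icc 1 q.natDegree, |∫ x, f x ^ i ∂μ - ∫ x, f x ^ i ∂ν| ≤ S) :
    |∫ x, w x * q.eval (f x) ∂μ - ∫ x, w x * q.eval (f x) ∂ν| ≤ C * (q.l1Norm * S) :=
  (abs_integral_mul_sub_le_of_ae_eq_zero (integrable_eval_of_integrable_pow q hμ) hq hw hqν).trans
    (mul_le_mul_of_nonneg_left (abs_integral_eval_sub_le_l1Norm_mul q hμ hν hS0 hS) hC)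

end Moments

theorem annihilating_polynomial_moment_bound_general
    (Θ : Set ℝ) (θ₀ M : ℝ) (hθ₀ : θ₀ ∈ Θ)
    (hM : IsLUB ((fun θ => |θ - θ₀|) '' Θ) M)
    (J : ℕ) (θs : Fin J → ℝ)
    (g g₀ : Measure ℝ) [IsProbabilityMeasure g] [IsProbabilityMeasure g₀]
    (hgΘ : g Θᶜ = 0) (hg₀Θ : g₀ Θᶜ = 0)
    (hθs : ∀ j, θs j ∈ Θ)
    (hsupp : g₀ (Set.range θs)ᶜ = 0)
    (m : ℕ → Measure ℝ → ℝ)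
    (hm : ∀ k ν, m k ν = ∫ θ, (θ - θ₀) ^ k ∂ν)
    (k : ℕ)
    (hne : (Finset.Icc 1 (2 * J)).Nonempty) :
    |(∫ θ, (θ - θ₀) ^ (k - 2 * J) * ∏ j, (θ - θs j) ^ 2 ∂g) -
        ∫ θ, (θ - θ₀) ^ (k - 2 * J) * ∏ j, (θ - θs j) ^ 2 ∂g₀| ≤
      (M + 1) ^ (2 * J) * M ^ (k - 2 * J) *
        (Finset.Icc 1 (2 * J)).sup' hne (fun j => |m j g - m j g₀|) := by
  set S := (Icc 1 (2 * J)).sup' hne fun j => |m j g - m j g₀|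
  set q : ℝ[X] := (∏ j, (X - C (θs j - θ₀))) ^ 2
  have hq (θ : ℝ) : q.eval (θ - θ₀) = ∏ j, (θ - θs j) ^ 2 := by simp [q, eval_prod, prod_pow]
  have hMΘ (θ : ℝ) (hθ : θ ∈ Θ) : |θ - θ₀| ≤ M := hM.1 ⟨θ, hθ, rfl⟩
  have hbound (ν : Measure ℝ) (hν : ν Θᶜ = 0) : ∀ᵐ θ ∂ν, |θ - θ₀| ≤ M := (ae_iff.2 hν).mono hMΘ
  have hmoments (ν : Measure ℝ) [IsFiniteMeasure ν] (hν : ν Θᶜ = 0) (i : ℕ) :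
      Integrable (fun θ => (θ - θ₀) ^ i) ν :=
    integrable_pow_of_ae_abs_le (by fun_prop) (hbound ν hν) i
  have hl1 : q.l1Norm ≤ (M + 1) ^ (2 * J) := by
    have := l1Norm_prod_X_sub_C_pow_le univ (fun j => θs j - θ₀) (fun j _ => hMΘ _ (hθs j)) 2
    rwa [card_univ, Fintype.card_fin, add_comm] at this
  have hS (i : ℕ) (hi : i ∈ Icc 1 q.natDegree) :
      |∫ θ, (θ - θ₀) ^ i ∂g - ∫ θ, (θ - θ₀) ^ i ∂g₀| ≤ S := by
    rw [natDegree_prod_X_sub_C_pow, card_univ, Fintype.card_fin] at hi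
    rw [← hm, ← hm]
    exact le_sup' (fun j => |m j g - m j g₀|) hi
  have hvanish : ∀ᵐ θ ∂g₀, q.eval (θ - θ₀) = 0 := (ae_iff.2 hsupp).mono fun θ ⟨j, hj⟩ => by
    rw [hq, ← hj]; exact prod_eq_zero (mem_univ j) (by simp)
  have hM0 : 0 ≤ M := (abs_nonneg _).trans (hMΘ θ₀ hθ₀)
  have hS0 : 0 ≤ S := le_sup'_of_le _ hne.choose_spec (abs_nonneg _)
  simp_rw [← hq]
  calc _ ≤ M ^ (k - 2 * J) * (q.l1Norm * S) :=
        abs_integral_mul_eval_sub_le_of_ae_eval_eq_zero q (hmoments g hgΘ) (hmoments g₀ hg₀Θ)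
          (ae_of_all _ fun θ => by rw [hq]; positivity) hvanish
          (pow_nonneg hM0 _)
          ((hbound g hgΘ).mono fun θ hθ =>
            abs_pow (θ - θ₀) _ ▸ pow_le_pow_left₀ (abs_nonneg _) hθ _) hS0 hS
    _ ≤ M ^ (k - 2 * J) * ((M + 1) ^ (2 * J) * S) := by gcongr
    _ = (M + 1) ^ (2 * J) * M ^ (k - 2 * J) * S := by ring

theorem annihilating_polynomial_moment_bound
    (Θ : Set ℝ) (θ₀ M : ℝ) (hθ₀ : θ₀ ∈ Θ)
    (hM : IsLUB ((fun θ => |θ - θ₀|) '' Θ) M)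
    (J : ℕ) (hJ : 1 ≤ J) (θs : Fin J → ℝ)
    (g g₀ : Measure ℝ) [IsProbabilityMeasure g] [IsProbabilityMeasure g₀]
    (hgΘ : g Θᶜ = 0) (hg₀Θ : g₀ Θᶜ = 0)
    (hθs : ∀ j, θs j ∈ Θ)
    (hsupp : g₀ (Set.range θs)ᶜ = 0)
    (m : ℕ → Measure ℝ → ℝ)
    (hm : ∀ k ν, m k ν = ∫ θ, (θ - θ₀) ^ k ∂ν)
    (k : ℕ) (hk : 2 * J < k)
    (hne : (Finset.Icc 1 (2 * J)).Nonempty) :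
    |(∫ θ, (θ - θ₀) ^ (k - 2 * J) * ∏ j, (θ - θs j) ^ 2 ∂g) -
        ∫ θ, (θ - θ₀) ^ (k - 2 * J) * ∏ j, (θ - θs j) ^ 2 ∂g₀| ≤
      (M + 1) ^ (2 * J) * M ^ (k - 2 * J) *
        (Finset.Icc 1 (2 * J)).sup' hne (fun j => |m j g - m j g₀|) :=
  annihilating_polynomial_moment_bound_general Θ θ₀ M hθ₀ hM J θs g g₀ hgΘ hg₀Θ hθs hsupp m hm k hne
end

section
/- Let g₀ be a probability measure on a bounded set Θ ⊆ ℝ^d supported on at most J points, let θ₀ ∈ Θ, M := sup_{θ∈Θ}‖θ-θ₀‖, and let g be any probability measure on Θ. Define moment tensors m_{k,ν} := ∫ (θ-θ₀)^{⊗k} dν(θ) and Δ := max_{1≤j≤2J} ‖m_{j,g} - m_{j,g₀}‖₂ (spectral norm). Then for every integer k > 2J, ‖m_{k,g} - m_{k,g₀}‖₂ ≤ k·(M+1)^{2Jk}·Δ. -/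
open MeasureTheory

noncomputable def tensorInner {d k : ℕ} (T : (Fin k → Fin d) → ℝ)
    (c : Fin k → Fin d → ℝ) : ℝ :=
  ∑ ι : Fin k → Fin d, T ι * ∏ j, c j (ι j)

noncomputable def tensorSpecNorm {d k : ℕ} (T : (Fin k → Fin d) → ℝ) : ℝ :=
  ⨆ c : {c : Fin k → Fin d → ℝ // ∀ j, ∑ i, c j i ^ 2 = 1}, tensorInner T c.1

noncomputable def momentTensor (d k : ℕ) (θ₀ : Fin d → ℝ)
    (ν : Measure (Fin d → ℝ)) : (Fin k → Fin d) → ℝ :=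
  fun ι => ∫ θ, ∏ j, (θ (ι j) - θ₀ (ι j)) ∂ν

/-!
Banach's theorem reduces the spectral norm of a symmetric tensor to its values at diagonal
arguments `(u, …, u)`: maximise `|f|` over tuples of unit vectors and, among the maximisers,
maximise `‖∑ cᵢ‖`. Polarisation in two slots shows that any two vectors of such a tuple agree
up to sign, since otherwise replacing both by the normalised `±(cᵢ + cⱼ)` keeps `|f|` maximal and
increases `‖∑ cᵢ‖`.

At a diagonal argument the moment tensors of `g` and `g₀` become the moments of the projection
`t = ⟪u, θ - θ₀⟫`, which lies in `[-M, M]` and takes at most `J` values under `g₀`. Let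
`G(r, T)` (`momentDiff`) be the difference of the `g`- and `g₀`-expectations of
`t ^ r ∏_{a ∈ T} (t - a)`, so that `|G(r, 0)| ≤ Δ` for `1 ≤ r ≤ 2J`. The identity
`G(r + 1, T) = G(r, a ::ₘ T) + a G(r, T)` gives `|G(r, T)| ≤ (M + 1) ^ |T| Δ` whenever
`r + |T| ≤ 2J`. For the multiset `R` of the values of `t` under `g₀`, each taken twice,
`∏_{a ∈ R} (t - a)` is nonnegative and vanishes `g₀`-a.e., so `|G(r, R)| ≤ M ^ r |G(0, R)|`.
Inducting on `r`, the same identity then gives `|G(r, T)| ≤ (M + 1) ^ (r + 2J) Δ` for all `T ≤ R`.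
-/

section Banach

open Function

variable {E : Type*} [NormedAddCommGroup E] [InnerProductSpace ℝ E]

theorem abs_apply_smul_add_eq_of_abs_apply_eq (b : E →ₗ[ℝ] E →ₗ[ℝ] ℝ) (hb : ∀ x y, b x y = b y x)
    {m : ℝ} (hm : ∀ w, ‖w‖ = 1 → |b w w| ≤ m) {x y : E} (hx : ‖x‖ = 1) (hy : ‖y‖ = 1)
    (hxy : |b x y| = m) (hne : x + y ≠ 0) :
    |b (‖x + y‖⁻¹ • (x + y)) (‖x + y‖⁻¹ • (x + y))| = m := by
  have hhom : ∀ w, |b w w| ≤ m * ‖w‖ ^ 2 := by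
    intro w
    rcases eq_or_ne w 0 with rfl | hw
    · simp
    have h := hm _ (norm_smul_inv_norm (𝕜 := ℝ) hw)
    simp only [map_smul, LinearMap.smul_apply, smul_eq_mul, abs_mul, RCLike.ofReal_real_eq_id,
      id, abs_inv, abs_norm] at h
    rw [← mul_assoc, ← sq, inv_pow, inv_mul_le_iff₀ (by positivity), mul_comm] at h
    exact h
  have hpolar : b (x + y) (x + y) - b (x - y) (x - y) = 4 * b x y := by
    simp only [map_add, map_sub, LinearMap.add_apply, LinearMap.sub_apply, hb y x]
    ring
  have hpar : ‖x + y‖ ^ 2 + ‖x - y‖ ^ 2 = 4 := by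
    rw [parallelogram_law_with_norm ℝ x y, hx, hy]
    norm_num
  have hlow : m * ‖x + y‖ ^ 2 ≤ |b (x + y) (x + y)| := by
    have h := abs_sub (b (x + y) (x + y)) (b (x - y) (x - y))
    have hxy' := hhom (x - y)
    rw [show ‖x - y‖ ^ 2 = 4 - ‖x + y‖ ^ 2 by linarith] at hxy'
    rw [hpolar, abs_mul, hxy, abs_of_pos four_pos] at h
    linarith
  refine le_antisymm (hm _ (norm_smul_inv_norm (𝕜 := ℝ) hne)) ?_
  simp only [map_smul, LinearMap.smul_apply, smul_eq_mul, abs_mul, abs_inv, abs_norm]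
  rw [← mul_assoc, ← sq, inv_pow, le_inv_mul_iff₀ (by positivity), mul_comm]
  exact hlow

theorem exists_norm_add_smul_lt_norm_add_two_smul (X u : E) (hu : ‖u‖ = 1) {s : ℝ} (hs₀ : 0 ≤ s)
    (hs : s < 2) : ∃ w, (w = u ∨ w = -u) ∧ ‖X + s • u‖ < ‖X + (2 : ℝ) • w‖ := by
  have hsq : ∀ (t : ℝ) (v : E), ‖v‖ = 1 →
      ‖X + t • v‖ ^ 2 = ‖X‖ ^ 2 + 2 * t * inner ℝ X v + t ^ 2 := by
    intro t v hv
    rw [norm_add_sq_real, inner_smul_right, norm_smul, hv, Real.norm_eq_abs, mul_one, sq_abs]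
    ring
  have hu' : ‖-u‖ = 1 := by rw [norm_neg, hu]
  rcases le_total 0 (inner ℝ X u) with h | h
  · refine ⟨u, .inl rfl, lt_of_pow_lt_pow_left₀ 2 (norm_nonneg _) ?_⟩
    rw [hsq s u hu, hsq 2 u hu]
    nlinarith
  · refine ⟨-u, .inr rfl, lt_of_pow_lt_pow_left₀ 2 (norm_nonneg _) ?_⟩
    rw [hsq s u hu, hsq 2 (-u) hu', inner_neg_right]
    nlinarith

theorem Finset.sum_update_eq_sub_add {ι M : Type*} [Fintype ι] [DecidableEq ι] [AddCommGroup M]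
    (g : ι → M) (i : ι) (b : M) : ∑ k, update g i b k = ∑ k, g k - g i + b := by
  rw [Finset.sum_update_of_mem (Finset.mem_univ i),
    Finset.sum_eq_add_sum_sdiff_singleton_of_mem (Finset.mem_univ i) g]
  abel

namespace ContinuousMultilinearMap

variable {ι : Type*} (f : ContinuousMultilinearMap ℝ (fun _ : ι => E) ℝ)

section PairForm

variable [DecidableEq ι]

def pairForm (c : ι → E) {i j : ι} (hij : i ≠ j) : E →ₗ[ℝ] E →ₗ[ℝ] ℝ :=
  LinearMap.mk₂ ℝ (fun x y => f (update (update c i x) j y))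
    (fun x x' y => by simp only [update_comm hij _ _ c, f.map_update_add])
    (fun a x y => by simp only [update_comm hij _ _ c, f.map_update_smul])
    (fun x y y' => f.map_update_add _ j y y')
    (fun a x y => f.map_update_smul _ j a y)

theorem pairForm_apply (c : ι → E) {i j : ι} (hij : i ≠ j) (x y : E) :
    f.pairForm c hij x y = f (update (update c i x) j y) := rfl

theorem pairForm_comm (hf : ∀ (σ : Equiv.Perm ι) (c : ι → E), f (c ∘ σ) = f c) (c : ι → E)
    {i j : ι} (hij : i ≠ j) (x y : E) : f.pairForm c hij x y = f.pairForm c hij y x := by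
  rw [pairForm_apply, pairForm_apply, ← hf (Equiv.swap i j)]
  congr 1
  ext k
  simp only [comp_apply, update_apply, Equiv.swap_apply_def]
  split_ifs <;> simp_all

end PairForm

theorem eq_or_eq_neg_of_norm_sum_maximal [Fintype ι]
    (hf : ∀ (σ : Equiv.Perm ι) (c : ι → E), f (c ∘ σ) = f c) {m : ℝ}
    (hm : ∀ c : ι → E, (∀ k, ‖c k‖ = 1) → |f c| ≤ m) {c : ι → E} (hc : ∀ k, ‖c k‖ = 1)
    (hfc : |f c| = m)
    (hmax : ∀ c' : ι → E, (∀ k, ‖c' k‖ = 1) → |f c'| = m → ‖∑ k, c' k‖ ≤ ‖∑ k, c k‖)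
    (i j : ι) : c i = c j ∨ c i = -c j := by
  classical
  by_contra! h
  obtain ⟨hne₁, hne₂⟩ := h
  have hij : i ≠ j := by rintro rfl; exact hne₁ rfl
  have hunit : ∀ x y : E, ‖x‖ = 1 → ‖y‖ = 1 → ∀ k, ‖update (update c i x) j y k‖ = 1 := by
    intro x y hx hy k
    simp only [update_apply]
    split_ifs
    exacts [hy, hx, hc k]
  set b := f.pairForm c hij
  have hbc : b (c i) (c j) = f c := by simp only [b, pairForm_apply, update_eq_self]
  have hsum : c i + c j ≠ 0 := fun h => hne₂ (eq_neg_of_add_eq_zero_left h)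
  set s := ‖c i + c j‖
  set u := s⁻¹ • (c i + c j)
  have hu : ‖u‖ = 1 := norm_smul_inv_norm (𝕜 := ℝ) hsum
  have hbu : |b u u| = m := abs_apply_smul_add_eq_of_abs_apply_eq b (f.pairForm_comm hf c hij)
    (fun w hw => hm _ (hunit w w hw hw)) (hc i) (hc j) (by rw [hbc, hfc]) hsum
  have hs : s < 2 := by
    have hpar := parallelogram_law_with_norm ℝ (c i) (c j)
    have hpos : 0 < ‖c i - c j‖ := norm_pos_iff.2 (sub_ne_zero.2 hne₁)
    rw [hc i, hc j] at hpar
    nlinarith [norm_nonneg (c i + c j)]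
  obtain ⟨w, hw, hlt⟩ :=
    exists_norm_add_smul_lt_norm_add_two_smul (∑ k, c k - c i - c j) u hu (norm_nonneg _) hs
  have hw₁ : ‖w‖ = 1 := by rcases hw with rfl | rfl <;> simp [hu]
  have hbw : |b w w| = m := by rcases hw with rfl | rfl <;> simp [hbu]
  have hsum_c : ∑ k, c k = ∑ k, c k - c i - c j + s • u := by
    rw [smul_inv_smul₀ (norm_ne_zero_iff.2 hsum)]
    abel
  have hsum_w : ∑ k, update (update c i w) j w k = ∑ k, c k - c i - c j + (2 : ℝ) • w := by
    rw [Finset.sum_update_eq_sub_add, Finset.sum_update_eq_sub_add, update_of_ne hij.symm,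
      two_smul]
    abel
  have hle := hmax _ (hunit w w hw₁ hw₁) hbw
  rw [hsum_w] at hle
  exact (hlt.trans_le (hle.trans_eq (congrArg norm hsum_c))).false

theorem abs_apply_eq_of_forall_eq_or_eq_neg [Fintype ι] {c : ι → E} {u : E}
    (h : ∀ k, c k = u ∨ c k = -u) : |f c| = |f fun _ => u| := by
  have hsign : ∀ k, ∃ ε : ℝ, |ε| = 1 ∧ c k = ε • u := fun k => (h k).elim
    (fun hk => ⟨1, abs_one, by rw [hk, one_smul]⟩)
    (fun hk => ⟨-1, by simp, by rw [hk, neg_one_smul]⟩)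
  choose ε hε hcε using hsign
  rw [funext hcε, f.map_smul_univ, smul_eq_mul, abs_mul, Finset.abs_prod,
    Finset.prod_eq_one fun k _ => hε k, one_mul]

theorem abs_apply_le_of_forall_abs_apply_diag_le [Fintype ι] [Nonempty ι]
    [FiniteDimensional ℝ E]
    (hf : ∀ (σ : Equiv.Perm ι) (c : ι → E), f (c ∘ σ) = f c) {B : ℝ}
    (hB : ∀ u : E, ‖u‖ = 1 → |f fun _ => u| ≤ B) {c : ι → E} (hc : ∀ k, ‖c k‖ = 1) :
    |f c| ≤ B := by
  set S := {c : ι → E | ∀ k, ‖c k‖ = 1}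
  have hS : IsCompact S := by
    convert isCompact_univ_pi fun _ : ι => isCompact_sphere (0 : E) 1 using 1
    ext
    simp [S]
  obtain ⟨c₁, hc₁S, hc₁⟩ := hS.exists_isMaxOn ⟨c, hc⟩ (continuous_abs.comp f.cont).continuousOn
  have hA : IsCompact {c' ∈ S | |f c'| = |f c₁|} :=
    hS.inter_right (isClosed_eq (continuous_abs.comp f.cont) continuous_const)
  obtain ⟨c₂, ⟨hc₂S, hc₂⟩, hc₂max⟩ := hA.exists_isMaxOn ⟨c₁, hc₁S, rfl⟩
    (continuous_norm.comp (continuous_finsetSum _ fun k _ => continuous_apply k)).continuousOn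
  obtain ⟨k₀⟩ := ‹Nonempty ι›
  have hsign : ∀ k, c₂ k = c₂ k₀ ∨ c₂ k = -c₂ k₀ := fun k =>
    f.eq_or_eq_neg_of_norm_sum_maximal hf (fun c' hc' => hc₁ hc') hc₂S hc₂
      (fun c' hc' hfc' => hc₂max ⟨hc', hfc'⟩) k k₀
  calc |f c| ≤ |f c₁| := hc₁ hc
    _ = |f c₂| := hc₂.symm
    _ = |f fun _ => c₂ k₀| := f.abs_apply_eq_of_forall_eq_or_eq_neg hsign
    _ ≤ B := hB _ (hc₂S k₀)

end ContinuousMultilinearMap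

end Banach

section Tensor

variable {d k : ℕ}

def IsSymmetricTensor (T : (Fin k → Fin d) → ℝ) : Prop :=
  ∀ (σ : Equiv.Perm (Fin k)) (ι : Fin k → Fin d), T (ι ∘ σ) = T ι

theorem IsSymmetricTensor.tensorInner_comp {T : (Fin k → Fin d) → ℝ} (hT : IsSymmetricTensor T)
    (c : Fin k → Fin d → ℝ) (σ : Equiv.Perm (Fin k)) : tensorInner T (c ∘ σ) = tensorInner T c := by
  refine Fintype.sum_equiv (σ.arrowCongr (Equiv.refl (Fin d))) _ _ fun ι => ?_
  have he : σ.arrowCongr (Equiv.refl (Fin d)) ι = ι ∘ σ.symm := rfl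
  rw [he, hT σ.symm, ← Equiv.prod_comp σ fun j => c j ((ι ∘ σ.symm) j)]
  simp

theorem tensorInner_sub (T T' : (Fin k → Fin d) → ℝ) (c : Fin k → Fin d → ℝ) :
    tensorInner (fun ι => T ι - T' ι) c = tensorInner T c - tensorInner T' c := by
  simp only [tensorInner, sub_mul, Finset.sum_sub_distrib]

theorem tensorInner_smul (T : (Fin k → Fin d) → ℝ) (ε : Fin k → ℝ) (c : Fin k → Fin d → ℝ) :
    tensorInner T (fun j => ε j • c j) = (∏ j, ε j) * tensorInner T c := by
  simp only [tensorInner, Finset.mul_sum, Pi.smul_apply, smul_eq_mul, Finset.prod_mul_distrib]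
  exact Finset.sum_congr rfl fun _ _ => by ring

noncomputable def tensorForm (T : (Fin k → Fin d) → ℝ) :
    ContinuousMultilinearMap ℝ (fun _ : Fin k => EuclideanSpace ℝ (Fin d)) ℝ :=
  ∑ ι : Fin k → Fin d, T ι •
    (ContinuousMultilinearMap.mkPiAlgebra ℝ (Fin k) ℝ).compContinuousLinearMap
      fun j => EuclideanSpace.proj (ι j)

theorem tensorForm_apply (T : (Fin k → Fin d) → ℝ) (c : Fin k → EuclideanSpace ℝ (Fin d)) :
    tensorForm T c = tensorInner T fun j => c j := by
  simp [tensorForm, tensorInner]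

theorem exists_sum_sq_eq_one (hd : 0 < d) : ∃ u : Fin d → ℝ, ∑ i, u i ^ 2 = 1 :=
  ⟨Pi.single ⟨0, hd⟩ 1, by simp [Pi.single_apply]⟩

theorem norm_toLp_eq_one_iff {v : Fin d → ℝ} :
    ‖(WithLp.toLp 2 v : EuclideanSpace ℝ (Fin d))‖ = 1 ↔ ∑ i, v i ^ 2 = 1 := by
  simp [EuclideanSpace.norm_eq, Real.sqrt_eq_one]

theorem abs_tensorInner_le_tensorSpecNorm (hk : 0 < k) (T : (Fin k → Fin d) → ℝ)
    {c : Fin k → Fin d → ℝ} (hc : ∀ j, ∑ i, c j i ^ 2 = 1) :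
    |tensorInner T c| ≤ tensorSpecNorm T := by
  have hbdd : BddAbove (Set.range fun c : {c : Fin k → Fin d → ℝ // ∀ j, ∑ i, c j i ^ 2 = 1} =>
      tensorInner T c.1) := by
    refine ⟨‖tensorForm T‖, ?_⟩
    rintro _ ⟨c, rfl⟩
    have h := (tensorForm T).le_opNorm fun j => WithLp.toLp 2 (c.1 j)
    simp only [tensorForm_apply, Real.norm_eq_abs, fun j => norm_toLp_eq_one_iff.2 (c.2 j),
      Finset.prod_const_one, mul_one] at h
    exact (le_abs_self _).trans h
  set j₀ : Fin k := ⟨0, hk⟩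
  have hflip :
      tensorInner T (fun j => (if j = j₀ then -1 else 1 : ℝ) • c j) = -tensorInner T c := by
    rw [tensorInner_smul]
    simp
  rcases le_total 0 (tensorInner T c) with h | h
  · rw [abs_of_nonneg h]
    exact le_ciSup hbdd ⟨c, hc⟩
  · rw [abs_of_nonpos h, ← hflip]
    refine le_ciSup hbdd ⟨_, fun j => ?_⟩
    split_ifs <;> simp [hc j]

theorem tensorSpecNorm_le_of_forall_diag (hd : 0 < d) (hk : 0 < k) {T : (Fin k → Fin d) → ℝ}
    (hT : IsSymmetricTensor T) {B : ℝ}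
    (hB : ∀ u : Fin d → ℝ, ∑ i, u i ^ 2 = 1 → |tensorInner T fun _ => u| ≤ B) :
    tensorSpecNorm T ≤ B := by
  obtain ⟨u₀, hu₀⟩ := exists_sum_sq_eq_one hd
  have : Nonempty {c : Fin k → Fin d → ℝ // ∀ j, ∑ i, c j i ^ 2 = 1} := ⟨⟨_, fun _ => hu₀⟩⟩
  have : Nonempty (Fin k) := ⟨⟨0, hk⟩⟩
  have hsymm : ∀ (σ : Equiv.Perm (Fin k)) c, tensorForm T (c ∘ σ) = tensorForm T c := fun σ c => by
    rw [tensorForm_apply, tensorForm_apply]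
    exact hT.tensorInner_comp (c ·) σ
  have hB' : ∀ u, ‖u‖ = 1 → |tensorForm T fun _ => u| ≤ B := fun u hu => by
    rw [tensorForm_apply]
    exact hB _ (norm_toLp_eq_one_iff.1 hu)
  refine ciSup_le fun c => (le_abs_self _).trans ?_
  have h := (tensorForm T).abs_apply_le_of_forall_abs_apply_diag_le hsymm hB'
    (c := fun j => WithLp.toLp 2 (c.1 j)) fun j => norm_toLp_eq_one_iff.2 (c.2 j)
  rw [tensorForm_apply] at h
  exact h

end Tensor

section OneDimensional

variable {Ω : Type*} [MeasurableSpace Ω]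

theorem integrable_comp_of_ae_abs_le {μ : Measure Ω} [IsFiniteMeasure μ] {X : Ω → ℝ}
    (hX : Measurable X) {M : ℝ} (hXM : ∀ᵐ ω ∂μ, |X ω| ≤ M) {φ : ℝ → ℝ} (hφ : Continuous φ) :
    Integrable (fun ω => φ (X ω)) μ := by
  obtain ⟨C, hC⟩ := (isCompact_Icc (a := -M) (b := M)).exists_bound_of_continuousOn hφ.continuousOn
  exact .of_bound (hφ.measurable.comp hX).aestronglyMeasurable C
    (hXM.mono fun ω hω => hC _ (abs_le.1 hω))

theorem continuous_pow_mul_multiset_prod_sub (r : ℕ) (T : Multiset ℝ) :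
    Continuous fun x : ℝ => x ^ r * (T.map (x - ·)).prod :=
  (continuous_pow r).mul (continuous_multiset_prod T fun _ _ => continuous_id.sub continuous_const)

noncomputable def momentDiff (μ ν : Measure Ω) (X : Ω → ℝ) (r : ℕ) (T : Multiset ℝ) : ℝ :=
  ∫ ω, X ω ^ r * (T.map (X ω - ·)).prod ∂μ - ∫ ω, X ω ^ r * (T.map (X ω - ·)).prod ∂ν

variable {μ ν : Measure Ω} {X : Ω → ℝ} {M : ℝ}

theorem nonneg_of_ae_abs_le [NeZero μ] (h : ∀ᵐ ω ∂μ, |X ω| ≤ M) : 0 ≤ M :=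
  let ⟨_, hω⟩ := h.exists
  (abs_nonneg _).trans hω

theorem momentDiff_succ [IsFiniteMeasure μ] [IsFiniteMeasure ν] (hX : Measurable X)
    (hμ : ∀ᵐ ω ∂μ, |X ω| ≤ M) (hν : ∀ᵐ ω ∂ν, |X ω| ≤ M) (r : ℕ) (a : ℝ) (T : Multiset ℝ) :
    momentDiff μ ν X (r + 1) T = momentDiff μ ν X r (a ::ₘ T) + a * momentDiff μ ν X r T := by
  have hsplit : ∀ (ρ : Measure Ω) [IsFiniteMeasure ρ], (∀ᵐ ω ∂ρ, |X ω| ≤ M) →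
      ∫ ω, X ω ^ (r + 1) * (T.map (X ω - ·)).prod ∂ρ =
        ∫ ω, X ω ^ r * ((a ::ₘ T).map (X ω - ·)).prod ∂ρ +
          a * ∫ ω, X ω ^ r * (T.map (X ω - ·)).prod ∂ρ := by
    intro ρ _ hρ
    rw [← integral_const_mul, ← integral_add
      (integrable_comp_of_ae_abs_le hX hρ (continuous_pow_mul_multiset_prod_sub r _))
      ((integrable_comp_of_ae_abs_le hX hρ (continuous_pow_mul_multiset_prod_sub r _)).const_mul a)]
    congr 1
    ext ω
    rw [Multiset.map_cons, Multiset.prod_cons]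
    ring
  simp only [momentDiff, hsplit μ hμ, hsplit ν hν]
  ring

theorem abs_momentDiff_le_of_ae_prod_eq_zero [IsProbabilityMeasure μ] (hX : Measurable X)
    (hμ : ∀ᵐ ω ∂μ, |X ω| ≤ M)
    {R : Multiset ℝ} (hRμ : ∀ᵐ ω ∂μ, 0 ≤ (R.map (X ω - ·)).prod)
    (hRν : ∀ᵐ ω ∂ν, (R.map (X ω - ·)).prod = 0) (r : ℕ) :
    |momentDiff μ ν X r R| ≤ M ^ r * |momentDiff μ ν X 0 R| := by
  have hM : 0 ≤ M := nonneg_of_ae_abs_le hμ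
  have hν₀ : ∀ r, ∫ ω, X ω ^ r * (R.map (X ω - ·)).prod ∂ν = 0 := fun r =>
    integral_eq_zero_of_ae (hRν.mono fun ω h => by simp [h])
  have hint := fun r =>
    integrable_comp_of_ae_abs_le hX hμ (continuous_pow_mul_multiset_prod_sub r R)
  simp only [momentDiff, hν₀, sub_zero]
  simp only [pow_zero, one_mul]
  calc |∫ ω, X ω ^ r * (R.map (X ω - ·)).prod ∂μ|
      ≤ ∫ ω, |X ω ^ r * (R.map (X ω - ·)).prod| ∂μ := abs_integral_le_integral_abs
    _ ≤ ∫ ω, M ^ r * (R.map (X ω - ·)).prod ∂μ := by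
        refine integral_mono_ae (hint r).abs (by simpa using (hint 0).const_mul (M ^ r)) ?_
        filter_upwards [hμ, hRμ] with ω hXω hPω
        rw [abs_mul, abs_pow, abs_of_nonneg hPω]
        exact mul_le_mul_of_nonneg_right (pow_le_pow_left₀ (abs_nonneg _) hXω r) hPω
    _ ≤ M ^ r * |∫ ω, (R.map (X ω - ·)).prod ∂μ| := by
        rw [integral_const_mul]
        exact mul_le_mul_of_nonneg_left (le_abs_self _) (pow_nonneg hM r)

variable [IsProbabilityMeasure μ] [IsProbabilityMeasure ν] {N : ℕ} {Δ : ℝ}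

theorem abs_momentDiff_le_of_add_card_le (hX : Measurable X) (hμ : ∀ᵐ ω ∂μ, |X ω| ≤ M)
    (hν : ∀ᵐ ω ∂ν, |X ω| ≤ M) (hΔ : 0 ≤ Δ)
    (hmom : ∀ j, 1 ≤ j → j ≤ N → |momentDiff μ ν X j 0| ≤ Δ) {T : Multiset ℝ}
    (hT : ∀ a ∈ T, |a| ≤ M) {r : ℕ} (hr : r + T.card ≤ N) :
    |momentDiff μ ν X r T| ≤ (M + 1) ^ T.card * Δ := by
  induction T using Multiset.induction_on generalizing r with
  | empty =>
    rcases Nat.eq_zero_or_pos r with rfl | hr₀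
    · simp [momentDiff, hΔ]
    · simpa using hmom r hr₀ (by simpa using hr)
  | cons a T ih =>
    have hT' : ∀ b ∈ T, |b| ≤ M := fun b hb => hT b (Multiset.mem_cons_of_mem hb)
    have ha : |a| ≤ M := hT a (Multiset.mem_cons_self a T)
    rw [Multiset.card_cons] at hr ⊢
    have hrec : momentDiff μ ν X r (a ::ₘ T) =
        momentDiff μ ν X (r + 1) T - a * momentDiff μ ν X r T := by
      rw [momentDiff_succ hX hμ hν r a T]
      ring
    calc |momentDiff μ ν X r (a ::ₘ T)|
        ≤ |momentDiff μ ν X (r + 1) T| + |a| * |momentDiff μ ν X r T| := by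
          rw [hrec, ← abs_mul]
          exact abs_sub _ _
      _ ≤ (M + 1) ^ T.card * Δ + M * ((M + 1) ^ T.card * Δ) :=
          add_le_add (ih hT' (by omega)) <|
            mul_le_mul ha (ih hT' (by omega)) (abs_nonneg _) ((abs_nonneg a).trans ha)
      _ = (M + 1) ^ (T.card + 1) * Δ := by ring

theorem abs_momentDiff_le_pow_add_card (hX : Measurable X) (hμ : ∀ᵐ ω ∂μ, |X ω| ≤ M)
    (hν : ∀ᵐ ω ∂ν, |X ω| ≤ M) (hΔ : 0 ≤ Δ)
    (hmom : ∀ j, 1 ≤ j → j ≤ N → |momentDiff μ ν X j 0| ≤ Δ) {R : Multiset ℝ}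
    (hR : ∀ a ∈ R, |a| ≤ M) (hRN : R.card ≤ N) (hRμ : ∀ᵐ ω ∂μ, 0 ≤ (R.map (X ω - ·)).prod)
    (hRν : ∀ᵐ ω ∂ν, (R.map (X ω - ·)).prod = 0) (r : ℕ) {T : Multiset ℝ} (hTR : T ≤ R) :
    |momentDiff μ ν X r T| ≤ (M + 1) ^ (r + R.card) * Δ := by
  have hM : 0 ≤ M := nonneg_of_ae_abs_le hμ
  have hlow : ∀ {T}, T ≤ R → |momentDiff μ ν X 0 T| ≤ (M + 1) ^ T.card * Δ := fun hTR =>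
    abs_momentDiff_le_of_add_card_le hX hμ hν hΔ hmom (fun a ha => hR a (Multiset.mem_of_le hTR ha))
      (by simpa using (Multiset.card_le_card hTR).trans hRN)
  induction r generalizing T with
  | zero =>
    refine (hlow hTR).trans ?_
    rw [zero_add]
    gcongr
    linarith
  | succ r ih =>
    rcases hTR.eq_or_lt with rfl | hlt
    · calc |momentDiff μ ν X (r + 1) T| ≤ M ^ (r + 1) * ((M + 1) ^ T.card * Δ) :=
            (abs_momentDiff_le_of_ae_prod_eq_zero hX hμ hRμ hRν (r + 1)).trans
              (mul_le_mul_of_nonneg_left (hlow le_rfl) (pow_nonneg hM _))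
        _ ≤ (M + 1) ^ (r + 1) * ((M + 1) ^ T.card * Δ) := by gcongr; linarith
        _ = (M + 1) ^ (r + 1 + T.card) * Δ := by ring
    · obtain ⟨a, haT⟩ := Multiset.lt_iff_cons_le.1 hlt
      have ha : |a| ≤ M := hR a (Multiset.mem_of_le haT (Multiset.mem_cons_self a T))
      rw [momentDiff_succ hX hμ hν r a T]
      calc |momentDiff μ ν X r (a ::ₘ T) + a * momentDiff μ ν X r T|
          ≤ |momentDiff μ ν X r (a ::ₘ T)| + |a| * |momentDiff μ ν X r T| := by
            rw [← abs_mul]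
            exact abs_add_le _ _
        _ ≤ (M + 1) ^ (r + R.card) * Δ + M * ((M + 1) ^ (r + R.card) * Δ) :=
            add_le_add (ih haT) <| mul_le_mul ha (ih ((Multiset.le_cons_self T a).trans haT))
              (abs_nonneg _) hM
        _ = (M + 1) ^ (r + 1 + R.card) * Δ := by ring

theorem abs_integral_pow_sub_le (hX : Measurable X) (hμ : ∀ᵐ ω ∂μ, |X ω| ≤ M) {s : Finset ℝ}
    (hs : ∀ a ∈ s, |a| ≤ M) (hν : ∀ᵐ ω ∂ν, X ω ∈ s) {J : ℕ} (hsJ : s.card ≤ J) (hΔ : 0 ≤ Δ)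
    (hmom : ∀ j ∈ Finset.Icc 1 (2 * J), |∫ ω, X ω ^ j ∂μ - ∫ ω, X ω ^ j ∂ν| ≤ Δ) (n : ℕ) :
    |∫ ω, X ω ^ n ∂μ - ∫ ω, X ω ^ n ∂ν| ≤ (M + 1) ^ (n + 2 * J) * Δ := by
  have hM : 0 ≤ M := nonneg_of_ae_abs_le hμ
  set R := s.val + s.val
  have hprod : ∀ x, (R.map (x - ·)).prod = (∏ a ∈ s, (x - a)) ^ 2 := fun x => by
    simp [R, sq]
  have hRcard : R.card ≤ 2 * J := by
    simp only [R, Multiset.card_add, Finset.card_val]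
    omega
  have hdiff : ∀ j, momentDiff μ ν X j 0 = ∫ ω, X ω ^ j ∂μ - ∫ ω, X ω ^ j ∂ν := by
    simp [momentDiff]
  have h := abs_momentDiff_le_pow_add_card hX hμ (hν.mono fun ω h => hs _ h) hΔ (N := 2 * J)
    (fun j h₁ h₂ => by rw [hdiff]; exact hmom j (Finset.mem_Icc.2 ⟨h₁, h₂⟩)) (R := R)
    (fun a ha => hs a (by simpa [R] using ha)) hRcard
    (Filter.Eventually.of_forall fun ω => by rw [hprod]; positivity)
    (hν.mono fun ω h => by rw [hprod, Finset.prod_eq_zero h (sub_self _)]; simp) n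
    (Multiset.zero_le R)
  rw [hdiff] at h
  refine h.trans ?_
  gcongr
  linarith

end OneDimensional

section Moments

variable {d k : ℕ} {θ₀ : Fin d → ℝ}

theorem abs_le_sqrt_sum_sq {ι : Type*} [Fintype ι] (x : ι → ℝ) (i : ι) :
    |x i| ≤ √(∑ j, x j ^ 2) :=
  Real.abs_le_sqrt (Finset.single_le_sum (fun j _ => sq_nonneg (x j)) (Finset.mem_univ i))

theorem abs_sum_mul_le_sqrt_sum_sq {ι : Type*} [Fintype ι] {u : ι → ℝ} (hu : ∑ i, u i ^ 2 = 1)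
    (x : ι → ℝ) : |∑ i, u i * x i| ≤ √(∑ i, x i ^ 2) :=
  Real.abs_le_sqrt (by simpa [hu] using Finset.sum_mul_sq_le_sq_mul_sq Finset.univ u x)

theorem momentTensor_comp (ν : Measure (Fin d → ℝ)) (σ : Equiv.Perm (Fin k)) (ι : Fin k → Fin d) :
    momentTensor d k θ₀ ν (ι ∘ σ) = momentTensor d k θ₀ ν ι := by
  simp only [momentTensor]
  congr 1
  ext θ
  exact Equiv.prod_comp σ fun j => θ (ι j) - θ₀ (ι j)

theorem isSymmetricTensor_momentTensor_sub (ν ν' : Measure (Fin d → ℝ)) :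
    IsSymmetricTensor fun ι => momentTensor d k θ₀ ν ι - momentTensor d k θ₀ ν' ι :=
  fun σ ι => by simp only [momentTensor_comp]

variable {Θ : Set (Fin d → ℝ)} {M : ℝ}

theorem tensorInner_momentTensor (hΘ : ∀ θ ∈ Θ, √(∑ l, (θ l - θ₀ l) ^ 2) ≤ M)
    {ν : Measure (Fin d → ℝ)} [IsFiniteMeasure ν] (hν : ν Θᶜ = 0) (c : Fin k → Fin d → ℝ) :
    tensorInner (momentTensor d k θ₀ ν) c = ∫ θ, ∏ j, ∑ i, c j i * (θ i - θ₀ i) ∂ν := by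
  have hcoord : ∀ᵐ θ ∂ν, ∀ i, |θ i - θ₀ i| ≤ M :=
    (ae_iff.2 hν).mono fun θ hθ i => (abs_le_sqrt_sum_sq _ i).trans (hΘ θ hθ)
  have hint : ∀ ι : Fin k → Fin d, Integrable (fun θ => ∏ j, (θ (ι j) - θ₀ (ι j))) ν := by
    intro ι
    refine .of_bound (by fun_prop : Continuous _).aestronglyMeasurable (M ^ k) ?_
    filter_upwards [hcoord] with θ hθ
    rw [Real.norm_eq_abs, Finset.abs_prod]
    exact (Finset.prod_le_prod (fun _ _ => abs_nonneg _) fun j _ => hθ (ι j)).trans (by simp)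
  simp_rw [Finset.prod_univ_sum, Fintype.piFinset_univ, Finset.prod_mul_distrib]
  rw [integral_finsetSum _ fun ι _ => (hint ι).const_mul _]
  simp only [tensorInner, momentTensor, integral_const_mul, mul_comm]

theorem tensorInner_momentTensor_sub_diag (hΘ : ∀ θ ∈ Θ, √(∑ l, (θ l - θ₀ l) ^ 2) ≤ M)
    {μ ν : Measure (Fin d → ℝ)} [IsFiniteMeasure μ] [IsFiniteMeasure ν] (hμ : μ Θᶜ = 0)
    (hν : ν Θᶜ = 0) (u : Fin d → ℝ) :
    tensorInner (fun ι : Fin k → Fin d => momentTensor d k θ₀ μ ι - momentTensor d k θ₀ ν ι)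
        (fun _ => u) =
      ∫ θ, (∑ i, u i * (θ i - θ₀ i)) ^ k ∂μ - ∫ θ, (∑ i, u i * (θ i - θ₀ i)) ^ k ∂ν := by
  rw [tensorInner_sub, tensorInner_momentTensor hΘ hμ, tensorInner_momentTensor hΘ hν]
  simp only [Finset.prod_const, Finset.card_univ, Fintype.card_fin]

theorem abs_integral_proj_pow_sub_le (hΘ : ∀ θ ∈ Θ, √(∑ l, (θ l - θ₀ l) ^ 2) ≤ M)
    {μ ν : Measure (Fin d → ℝ)} [IsProbabilityMeasure μ] [IsProbabilityMeasure ν]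
    (hμ : μ Θᶜ = 0) (hν : ν Θᶜ = 0) {S : Finset (Fin d → ℝ)} (hS : ν (↑S)ᶜ = 0) {J : ℕ}
    (hSJ : S.card ≤ J) {Δ : ℝ} (hΔ : 0 ≤ Δ) {u : Fin d → ℝ} (hu : ∑ i, u i ^ 2 = 1)
    (hmom : ∀ j ∈ Finset.Icc 1 (2 * J), |∫ θ, (∑ i, u i * (θ i - θ₀ i)) ^ j ∂μ -
      ∫ θ, (∑ i, u i * (θ i - θ₀ i)) ^ j ∂ν| ≤ Δ) (n : ℕ) :
    |∫ θ, (∑ i, u i * (θ i - θ₀ i)) ^ n ∂μ - ∫ θ, (∑ i, u i * (θ i - θ₀ i)) ^ n ∂ν| ≤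
      (M + 1) ^ (n + 2 * J) * Δ := by
  classical
  set t : (Fin d → ℝ) → ℝ := fun θ => ∑ i, u i * (θ i - θ₀ i)
  have ht : ∀ θ ∈ Θ, |t θ| ≤ M := fun θ hθ => (abs_sum_mul_le_sqrt_sum_sq hu _).trans (hΘ θ hθ)
  refine abs_integral_pow_sub_le (by fun_prop) ((ae_iff.2 hμ).mono ht)
    (s := (S.filter (· ∈ Θ)).image t) (fun a ha => ?_) ?_
    (Finset.card_image_le.trans ((Finset.card_filter_le _ _).trans hSJ)) hΔ hmom n
  · obtain ⟨θ, hθ, rfl⟩ := Finset.mem_image.1 ha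
    exact ht θ (Finset.mem_filter.1 hθ).2
  · filter_upwards [ae_iff.2 hS, ae_iff.2 hν] with θ hθS hθΘ
    exact Finset.mem_image_of_mem _ (Finset.mem_filter.2 ⟨hθS, hθΘ⟩)

end Moments

theorem multivariate_moment_comparison
    (d : ℕ) (hd : 0 < d) (Θ : Set (Fin d → ℝ)) (θ₀ : Fin d → ℝ) (hθ₀ : θ₀ ∈ Θ)
    (M : ℝ)
    (hM : IsLUB ((fun θ => Real.sqrt (∑ l, (θ l - θ₀ l) ^ 2)) '' Θ) M)
    (J : ℕ) (hJ : 1 ≤ J)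
    (g g₀ : Measure (Fin d → ℝ)) [IsProbabilityMeasure g] [IsProbabilityMeasure g₀]
    (hgΘ : g Θᶜ = 0) (hg₀Θ : g₀ Θᶜ = 0)
    (S : Finset (Fin d → ℝ)) (hScard : S.card ≤ J) (hS : g₀ (↑S : Set (Fin d → ℝ))ᶜ = 0)
    (Δ : ℝ) (hne : (Finset.Icc 1 (2 * J)).Nonempty)
    (hΔ : Δ = (Finset.Icc 1 (2 * J)).sup' hne
      (fun j => tensorSpecNorm
        (fun ι : Fin j → Fin d => momentTensor d j θ₀ g ι - momentTensor d j θ₀ g₀ ι)))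
    (k : ℕ) (hk : 2 * J < k) :
    tensorSpecNorm
        (fun ι : Fin k → Fin d => momentTensor d k θ₀ g ι - momentTensor d k θ₀ g₀ ι) ≤
      (k : ℝ) * (M + 1) ^ (2 * J * k) * Δ := by
  have hΘ : ∀ θ ∈ Θ, √(∑ l, (θ l - θ₀ l) ^ 2) ≤ M := fun θ hθ => hM.1 ⟨θ, hθ, rfl⟩
  have hlow : ∀ u : Fin d → ℝ, ∑ i, u i ^ 2 = 1 → ∀ j ∈ Finset.Icc 1 (2 * J),
      |∫ θ, (∑ i, u i * (θ i - θ₀ i)) ^ j ∂g - ∫ θ, (∑ i, u i * (θ i - θ₀ i)) ^ j ∂g₀| ≤ Δ :=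
    fun u hu j hj => by
      rw [← tensorInner_momentTensor_sub_diag hΘ hgΘ hg₀Θ, hΔ]
      exact (abs_tensorInner_le_tensorSpecNorm (Finset.mem_Icc.1 hj).1 _ fun _ => hu).trans
        (Finset.le_sup' (fun j => tensorSpecNorm fun ι : Fin j → Fin d =>
          momentTensor d j θ₀ g ι - momentTensor d j θ₀ g₀ ι) hj)
  obtain ⟨u₀, hu₀⟩ := exists_sum_sq_eq_one hd
  have hΔ₀ : 0 ≤ Δ := (abs_nonneg _).trans (hlow u₀ hu₀ 1 (Finset.mem_Icc.2 ⟨le_rfl, by omega⟩))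
  have hM₀ : 0 ≤ M := by simpa using hΘ θ₀ hθ₀
  refine tensorSpecNorm_le_of_forall_diag hd (by omega) (isSymmetricTensor_momentTensor_sub g g₀)
    fun u hu => ?_
  rw [tensorInner_momentTensor_sub_diag hΘ hgΘ hg₀Θ]
  calc _ ≤ (M + 1) ^ (k + 2 * J) * Δ :=
        abs_integral_proj_pow_sub_le hΘ hgΘ hg₀Θ hS hScard hΔ₀ hu (hlow u hu) k
    _ ≤ 1 * (M + 1) ^ (2 * J * k) * Δ := by
        rw [one_mul]
        gcongr
        · linarith
        · nlinarith
    _ ≤ k * (M + 1) ^ (2 * J * k) * Δ := by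
        gcongr
        exact_mod_cast hk.pos
end
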